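/- Fix n ≥ 1 and an open set U ⊆ ℂⁿ × ℂⁿ. If the formal WKB symbols p and q on U both satisfy the microdifferential estimates, then the Leibniz product p★q also satisfies the microdifferential estimates. -/

import Mathlib

open scoped BigOperators

/-- The phase space `ℂⁿ × ℂⁿ` with coordinates `(x, u)`. -/
abbrev Phase (n : ℕ) := (Fin n → ℂ) × (Fin n → ℂ)

/-- The partial derivative `∂_{x_i}` of a function on `ℂⁿ × ℂⁿ`. -/
noncomputable def pdx {n : ℕ} (i : Fin n) (h : Phase n → ℂ) : Phase n → ℂ :=
  fun z => fderiv ℂ h z (Pi.single i 1, 0)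

/-- The partial derivative `∂_{u_i}` of a function on `ℂⁿ × ℂⁿ`. -/
noncomputable def pdu {n : ℕ} (i : Fin n) (h : Phase n → ℂ) : Phase n → ℂ :=
  fun z => fderiv ℂ h z (0, Pi.single i 1)

/-- The iterated partial derivative `∂_x^α`. -/
noncomputable def dX {n : ℕ} (α : Fin n → ℕ) (h : Phase n → ℂ) : Phase n → ℂ :=
  ((List.finRange n).foldr (fun i F => (pdx i)^[α i] ∘ F) id) h

/-- The iterated partial derivative `∂_u^α`. -/
noncomputable def dU {n : ℕ} (α : Fin n → ℕ) (h : Phase n → ℂ) : Phase n → ℂ :=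
  ((List.finRange n).foldr (fun i F => (pdu i)^[α i] ∘ F) id) h

/-- The Leibniz product of two (coefficient families of) formal WKB symbols:
`(p★q)_j = Σ_{α ∈ ℕⁿ, k+l−|α|=j} (1/α!) · ∂_u^α p_k · ∂_x^α q_l`,
written as a `finsum` over the pairs `(α, k)` (with `l = j + |α| − k`);
for symbols vanishing in large degrees this sum has finite support. -/
noncomputable def leibniz {n : ℕ} (p q : ℤ → Phase n → ℂ) : ℤ → Phase n → ℂ :=
  fun j z => ∑ᶠ ak : (Fin n → ℕ) × ℤ,
    ((∏ i, (ak.1 i).factorial : ℕ) : ℂ)⁻¹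
      * dU ak.1 (p ak.2) z
      * dX ak.1 (q (j + ((∑ i, ak.1 i : ℕ) : ℤ) - ak.2)) z

/-- The unit symbol `1`. -/
def oneSymbol (n : ℕ) : ℤ → Phase n → ℂ := fun j _ => if j = 0 then 1 else 0


/-- A formal WKB symbol satisfies the microdifferential estimates (7.4) if for every
compact `K ⊆ U` there is `C_K > 0` with `sup_K |p_j| ≤ C_K^{−j}·(−j)!` for all `j < 0`. -/
def MicroEstimates {n : ℕ} (U : Set (Phase n)) (p : ℤ → Phase n → ℂ) : Prop :=
  ∀ K : Set (Phase n), K ⊆ U → IsCompact K →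
    ∃ C : ℝ, 0 < C ∧ ∀ j : ℤ, j < 0 → ∀ z ∈ K,
      ‖p j z‖ ≤ C ^ (-j).toNat * ((-j).toNat).factorial

/-!
On a compact `K ⊆ U` choose `r > 0` with `cthickening r K ⊆ U` and `C ≥ 1` with
`‖p_k‖, ‖q_k‖ ≤ C^(k⁻ + 1) k⁻!` there for all `k`, where `k⁻ = max 0 (-k)` (the estimates
handle `k < 0`, continuity the finitely many `0 ≤ k ≤ mp`). Iterated Cauchy estimates bound
`∂^α p_k` on `K` by `|α|! (e/r)^|α| C^(k⁻ + 1) k⁻!`, the multinomial bound `|α|!/α! ≤ n^|α|`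
absorbs `1/α!`, and `a! b! c! ≤ (a + b + c)!` merges the remaining factorials. As
`|α| + k⁻ + l⁻ ≤ -j + P` with `P = mp⁺ + mq⁺` for every term of `(p★q)_j`, each term is
`O(D^(-j) (-j + P)!)`, there are polynomially many terms in `-j`, and
`(m + P)! ≤ 2^(m + P) m! P!` brings this back to the form `G^(-j) (-j)!`.
-/

open Metric Set Filter Real
open scoped Nat

section FactorialBounds

lemma Nat.multinomial_univ_le_card_pow {ι : Type*} [Fintype ι] [DecidableEq ι] (f : ι → ℕ) :
    Nat.multinomial (Finset.univ : Finset ι) f ≤ Fintype.card ι ^ ∑ i, f i := by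
  have h := Finset.sum_pow_eq_sum_piAntidiag (Finset.univ : Finset ι) (fun _ => (1 : ℕ))
    (∑ i, f i)
  simp only [Finset.sum_const, Finset.card_univ, smul_eq_mul, mul_one, one_pow,
    Finset.prod_const_one, Nat.cast_id] at h
  rw [h]
  exact Finset.single_le_sum (fun _ _ => Nat.zero_le _) (by simp)

lemma Nat.factorial_mul_factorial_le (a b : ℕ) : a ! * b ! ≤ (a + b)! :=
  Nat.le_of_dvd (Nat.factorial_pos _) (Nat.factorial_mul_factorial_dvd_factorial_add a b)

lemma Nat.factorial_add_le (a b : ℕ) : (a + b)! ≤ 2 ^ (a + b) * a ! * b ! := by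
  rw [← Nat.add_choose_mul_factorial_mul_factorial]
  gcongr
  exact Nat.choose_le_two_pow _ _

lemma pow_self_le_factorial_mul_exp (a : ℕ) : (a : ℝ) ^ a ≤ a ! * exp 1 ^ a := by
  have h := pow_div_factorial_le_exp (a : ℝ) (Nat.cast_nonneg a) a
  rw [div_le_iff₀ (by positivity), ← exp_one_pow] at h
  linarith

lemma pow_mul_factorial_mul_le {x C : ℝ} (hx : 0 ≤ x) (hC : 1 ≤ C) {a b c N : ℕ}
    (h : a + b + c ≤ N) :
    x ^ a * a ! * (C ^ (b + 1) * b !) * (C ^ (c + 1) * c !) ≤ C ^ 2 * max x C ^ N * N ! := by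
  set D := max x C
  have hD : 1 ≤ D := hC.trans (le_max_right _ _)
  have hfact : (a ! * b ! * c ! : ℝ) ≤ N ! := by
    exact_mod_cast calc
      a ! * b ! * c ! ≤ (a + b)! * c ! :=
          Nat.mul_le_mul_right _ (Nat.factorial_mul_factorial_le a b)
      _ ≤ (a + b + c)! := Nat.factorial_mul_factorial_le _ _
      _ ≤ N ! := Nat.factorial_le h
  have hpow : x ^ a * C ^ b * C ^ c ≤ D ^ N := calc
    x ^ a * C ^ b * C ^ c ≤ D ^ a * D ^ b * D ^ c := by
      gcongr
      exacts [le_max_left _ _, le_max_right _ _, le_max_right _ _]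
    _ = D ^ (a + b + c) := by rw [pow_add, pow_add]
    _ ≤ D ^ N := pow_le_pow_right₀ hD h
  calc x ^ a * a ! * (C ^ (b + 1) * b !) * (C ^ (c + 1) * c !)
      = C ^ 2 * (x ^ a * C ^ b * C ^ c) * (a ! * b ! * c !) := by ring
    _ ≤ C ^ 2 * D ^ N * N ! := by gcongr

lemma exists_pow_mul_factorial_bound (P d : ℕ) {K D : ℝ} (hK : 0 ≤ K) (hD : 0 ≤ D) :
    ∃ G > 0, ∀ m ≥ 1,
      ((m + P + 1 : ℕ) : ℝ) ^ d * (K * D ^ (m + P) * (m + P)!) ≤ G ^ m * m ! := by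
  set H : ℝ := 2 ^ (d + 1) * D
  set K₀ : ℝ := K * P ! * H ^ P
  refine ⟨max 1 K₀ * max 1 H, by positivity, fun m hm => ?_⟩
  have hlin : ((m + P + 1 : ℕ) : ℝ) ≤ 2 ^ (m + P) := by
    exact_mod_cast Nat.lt_two_pow_self
  have hfact : ((m + P)! : ℝ) ≤ 2 ^ (m + P) * m ! * P ! := by
    exact_mod_cast Nat.factorial_add_le m P
  calc ((m + P + 1 : ℕ) : ℝ) ^ d * (K * D ^ (m + P) * (m + P)!)
      ≤ (2 ^ (m + P)) ^ d * (K * D ^ (m + P) * (2 ^ (m + P) * m ! * P !)) := by gcongr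
    _ = K₀ * H ^ m * m ! := by
      simp only [K₀, H, mul_pow, ← pow_mul, pow_add]
      ring
    _ ≤ max 1 K₀ ^ m * max 1 H ^ m * m ! := by
      gcongr
      · exact (le_max_right 1 K₀).trans (le_self_pow₀ (le_max_left 1 K₀) (by omega))
      · exact le_max_right 1 H
    _ = (max 1 K₀ * max 1 H) ^ m * m ! := by rw [mul_pow]

end FactorialBounds

section DirectionalDerivative

variable {E : Type*} [NormedAddCommGroup E] [NormedSpace ℂ E]

noncomputable def dirDeriv (v : E) (f : E → ℂ) : E → ℂ := fun z => fderiv ℂ f z v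

lemma hasDerivAt_comp_add_smul {f : E → ℂ} {z v : E} {t : ℂ}
    (hf : DifferentiableAt ℂ f (z + t • v)) :
    HasDerivAt (fun s : ℂ => f (z + s • v)) (fderiv ℂ f (z + t • v) v) t := by
  have hline : HasDerivAt (fun s : ℂ => z + s • v) v t := by
    simpa using ((hasDerivAt_id t).smul_const v).const_add z
  exact hf.hasFDerivAt.comp_hasDerivAt t hline

lemma diffContOnCl_comp_add_smul {f : E → ℂ} {z v : E} {δ : ℝ} (hδ : 0 < δ)
    (hf : ∀ s : ℂ, ‖s‖ ≤ δ → DifferentiableAt ℂ f (z + s • v)) :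
    DiffContOnCl ℂ (fun s : ℂ => f (z + s • v)) (ball 0 δ) := by
  have hdiff : ∀ s ∈ closedBall (0 : ℂ) δ, DifferentiableAt ℂ (fun s : ℂ => f (z + s • v)) s :=
    fun s hs => (hasDerivAt_comp_add_smul (hf s (mem_closedBall_zero_iff.1 hs))).differentiableAt
  refine ⟨fun s hs => (hdiff s (ball_subset_closedBall hs)).differentiableWithinAt, ?_⟩
  rw [closure_ball 0 hδ.ne']
  exact fun s hs => (hdiff s hs).continuousAt.continuousWithinAt

lemma deriv_comp_add_smul_zero {f : E → ℂ} {z v : E} (hf : DifferentiableAt ℂ f z) :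
    deriv (fun s : ℂ => f (z + s • v)) 0 = fderiv ℂ f z v := by
  simpa using (hasDerivAt_comp_add_smul (t := 0) (v := v) (by simpa using hf)).deriv

lemma norm_fderiv_apply_le {f : E → ℂ} {z v : E} {δ A : ℝ} (hδ : 0 < δ)
    (hf : ∀ s : ℂ, ‖s‖ ≤ δ → DifferentiableAt ℂ f (z + s • v))
    (hA : ∀ s : ℂ, ‖s‖ = δ → ‖f (z + s • v)‖ ≤ A) :
    ‖fderiv ℂ f z v‖ ≤ A / δ := by
  rw [← deriv_comp_add_smul_zero (by simpa using hf 0 (by simpa using hδ.le))]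
  exact Complex.norm_deriv_le_of_forall_mem_sphere_norm_le hδ (diffContOnCl_comp_add_smul hδ hf)
    fun s hs => hA s (mem_sphere_zero_iff_norm.1 hs)

lemma norm_fderiv_le {f : E → ℂ} {z : E} {δ A : ℝ} (hδ : 0 < δ)
    (hf : ∀ w ∈ closedBall z δ, DifferentiableAt ℂ f w) (hA : ∀ w ∈ closedBall z δ, ‖f w‖ ≤ A) :
    ‖fderiv ℂ f z‖ ≤ A / δ := by
  have hmem : ∀ v : E, ‖v‖ = 1 → ∀ s : ℂ, ‖s‖ ≤ δ → z + s • v ∈ closedBall z δ := by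
    intro v hv s hs
    rwa [add_mem_closedBall_iff_norm, norm_smul, hv, mul_one]
  have hA0 : 0 ≤ A := (norm_nonneg _).trans (hA z (mem_closedBall_self hδ.le))
  refine ContinuousLinearMap.opNorm_le_of_unit_norm (by positivity) fun v hv => ?_
  exact norm_fderiv_apply_le hδ (fun s hs => hf _ (hmem v hv s hs))
    fun s hs => hA _ (hmem v hv s hs.le)

lemma fderiv_apply_eq_integral {f : E → ℂ} {z v : E} {δ : ℝ} (hδ : 0 < δ)
    (hf : ∀ s : ℂ, ‖s‖ ≤ δ → DifferentiableAt ℂ f (z + s • v)) :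
    fderiv ℂ f z v =
      ∫ θ in (0 : ℝ)..2 * π, (2 * π : ℂ)⁻¹ * (circleMap 0 δ θ)⁻¹ * f (z + circleMap 0 δ θ • v) := by
  have h := (diffContOnCl_comp_add_smul hδ hf).deriv_eq_smul_circleIntegral hδ
  rw [deriv_comp_add_smul_zero (by simpa using hf 0 (by simpa using hδ.le)),
    ← inv_smul_eq_iff₀ (by simp [Real.pi_ne_zero] : (2 * π * Complex.I : ℂ) ≠ 0)] at h
  rw [← h, circleIntegral, ← intervalIntegral.integral_smul]
  refine intervalIntegral.integral_congr fun θ _ => ?_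
  have hc : circleMap 0 δ θ ≠ 0 := circleMap_ne_center hδ.ne'
  simp only [deriv_circleMap, sub_zero, smul_eq_mul]
  field_simp

lemma hasFDerivAt_intervalIntegral_mul_comp_add [FiniteDimensional ℂ E] {f : E → ℂ}
    {g : ℝ → ℂ} {γ : ℝ → E} {a b B : ℝ} {s : Set E} {z₀ : E} (hg : Continuous g)
    (hγ : Continuous γ) (hs : s ∈ nhds z₀)
    (hf : ∀ x ∈ s, ∀ θ, DifferentiableAt ℂ f (x + γ θ))
    (hB : ∀ x ∈ s, ∀ θ, ‖fderiv ℂ f (x + γ θ)‖ ≤ B) :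
    HasFDerivAt (fun x => ∫ θ in a..b, g θ * f (x + γ θ))
      (∫ θ in a..b, g θ • fderiv ℂ f (z₀ + γ θ)) z₀ := by
  borelize E
  have hcont : ∀ x ∈ s, Continuous fun θ => g θ * f (x + γ θ) := fun x hx =>
    hg.mul (continuous_iff_continuousAt.2 fun θ =>
      (hf x hx θ).continuousAt.comp (f := fun θ => x + γ θ) (continuous_const.add hγ).continuousAt)
  refine intervalIntegral.hasFDerivAt_integral_of_dominated_of_fderiv_le (𝕜 := ℂ)
    (μ := MeasureTheory.volume) (F := fun x θ => g θ * f (x + γ θ))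
    (F' := fun x θ => g θ • fderiv ℂ f (x + γ θ)) (bound := fun θ => ‖g θ‖ * B) hs ?_
    ((hcont z₀ (mem_of_mem_nhds hs)).intervalIntegrable _ _) ?_ ?_
    ((hg.norm.mul continuous_const).intervalIntegrable _ _) ?_
  · filter_upwards [hs] with x hx using (hcont x hx).aestronglyMeasurable
  · exact hg.aestronglyMeasurable.smul
      ((measurable_fderiv ℂ f).comp (continuous_const.add hγ).measurable).aestronglyMeasurable
  · refine MeasureTheory.ae_of_all _ fun θ _ x hx => ?_
    rw [norm_smul]
    exact mul_le_mul_of_nonneg_left (hB x hx θ) (norm_nonneg _)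
  · exact MeasureTheory.ae_of_all _ fun θ _ x hx =>
      ((hasFDerivAt_comp_add_right (γ θ)).2 (hf x hx θ).hasFDerivAt).const_mul (g θ)

/-- Differentiate the Cauchy formula `fderiv_apply_eq_integral` under the integral sign; the
dominating bound on `fderiv f` is the Cauchy estimate `norm_fderiv_le` on a larger ball. -/
theorem DifferentiableOn.dirDeriv [FiniteDimensional ℂ E] {U : Set E} {f : E → ℂ}
    (hf : DifferentiableOn ℂ f U) (hU : IsOpen U) (v : E) :
    DifferentiableOn ℂ (_root_.dirDeriv v f) U := by
  intro z₀ hz₀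
  obtain ⟨ε, hε, hεU⟩ := Metric.isOpen_iff.1 hU z₀ hz₀
  set ρ := ε / 4 with hρε
  have hρ : 0 < ρ := by positivity
  have hU3 : closedBall z₀ (3 * ρ) ⊆ U := (closedBall_subset_ball (by linarith)).trans hεU
  have hdiff : ∀ w ∈ closedBall z₀ (3 * ρ), DifferentiableAt ℂ f w :=
    fun w hw => hf.differentiableAt (hU.mem_nhds (hU3 hw))
  obtain ⟨M, hM⟩ := (isCompact_closedBall z₀ (3 * ρ)).exists_bound_of_continuousOn
    (hf.continuousOn.mono hU3)
  have hfderiv : ∀ w ∈ closedBall z₀ (2 * ρ), ‖fderiv ℂ f w‖ ≤ M / ρ := by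
    intro w hw
    have hball : closedBall w ρ ⊆ closedBall z₀ (3 * ρ) :=
      closedBall_subset_closedBall' (by rw [mem_closedBall] at hw; linarith)
    exact norm_fderiv_le hρ (fun y hy => hdiff y (hball hy)) fun y hy => hM y (hball hy)
  set σ := ρ / (‖v‖ + 1)
  have hσ : 0 < σ := by positivity
  have hpath : ∀ x ∈ ball z₀ ρ, ∀ s : ℂ, ‖s‖ ≤ σ → x + s • v ∈ closedBall z₀ (2 * ρ) := by
    intro x hx s hs
    have hsv : ‖s • v‖ ≤ ρ := calc
      ‖s • v‖ ≤ σ * (‖v‖ + 1) := by rw [norm_smul]; gcongr; linarith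
      _ = ρ := div_mul_cancel₀ _ (by positivity)
    rw [mem_ball, dist_eq_norm] at hx
    rw [mem_closedBall, dist_eq_norm, add_sub_right_comm]
    linarith [norm_add_le (x - z₀) (s • v)]
  have hcircle : ∀ θ, ‖circleMap 0 σ θ‖ ≤ σ := fun θ => by
    rw [norm_circleMap_zero, abs_of_pos hσ]
  have hrep : _root_.dirDeriv v f =ᶠ[nhds z₀] fun x => ∫ θ in (0 : ℝ)..2 * π,
      (2 * π : ℂ)⁻¹ * (circleMap 0 σ θ)⁻¹ * f (x + circleMap 0 σ θ • v) :=
    Filter.eventually_of_mem (ball_mem_nhds z₀ hρ) fun x hx => fderiv_apply_eq_integral hσ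
      fun s hs => hdiff _ (closedBall_subset_closedBall (by linarith) (hpath x hx s hs))
  have hderiv := hasFDerivAt_intervalIntegral_mul_comp_add (a := 0) (b := 2 * π)
    (g := fun θ => (2 * π : ℂ)⁻¹ * (circleMap 0 σ θ)⁻¹) (γ := fun θ => circleMap 0 σ θ • v)
    (continuous_const.mul ((continuous_circleMap 0 σ).inv₀ fun θ => circleMap_ne_center hσ.ne'))
    ((continuous_circleMap 0 σ).smul continuous_const) (ball_mem_nhds z₀ hρ)
    (fun x hx θ => hdiff _ (closedBall_subset_closedBall (by linarith)
      (hpath x hx _ (hcircle θ))))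
    (fun x hx θ => hfderiv _ (hpath x hx _ (hcircle θ)))
  exact (hderiv.differentiableAt.congr_of_eventuallyEq hrep).differentiableWithinAt

noncomputable def iteratedDirDeriv (vs : List E) (f : E → ℂ) : E → ℂ := vs.foldr dirDeriv f

lemma iteratedDirDeriv_replicate (m : ℕ) (v : E) (f : E → ℂ) :
    iteratedDirDeriv (List.replicate m v) f = (dirDeriv v)^[m] f := by
  induction m with
  | zero => rfl
  | succ m ih =>
    rw [Function.iterate_succ_apply', ← ih]
    rfl

lemma iteratedDirDeriv_append (vs ws : List E) (f : E → ℂ) :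
    iteratedDirDeriv (vs ++ ws) f = iteratedDirDeriv vs (iteratedDirDeriv ws f) :=
  List.foldr_append

lemma iteratedDirDeriv_zero (vs : List E) : iteratedDirDeriv vs (0 : E → ℂ) = 0 := by
  induction vs with
  | nil => rfl
  | cons v vs ih =>
    show dirDeriv v (iteratedDirDeriv vs 0) = 0
    rw [ih]
    funext z
    simp [dirDeriv]

theorem DifferentiableOn.iteratedDirDeriv [FiniteDimensional ℂ E] {U : Set E} {f : E → ℂ}
    (hf : DifferentiableOn ℂ f U) (hU : IsOpen U) (vs : List E) :
    DifferentiableOn ℂ (_root_.iteratedDirDeriv vs f) U := by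
  induction vs with
  | nil => exact hf
  | cons v vs ih => exact ih.dirDeriv hU v

lemma norm_iteratedDirDeriv_le_div_pow [FiniteDimensional ℂ E] {U K : Set E} {f : E → ℂ}
    (hf : DifferentiableOn ℂ f U) (hU : IsOpen U) {vs : List E} (hvs : ∀ v ∈ vs, ‖v‖ ≤ 1)
    {s δ A : ℝ} (hs : 0 ≤ s) (hδ : 0 < δ) (hKU : cthickening (s + vs.length * δ) K ⊆ U)
    (hA : ∀ x ∈ cthickening (s + vs.length * δ) K, ‖f x‖ ≤ A) {z : E}
    (hz : z ∈ cthickening s K) :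
    ‖iteratedDirDeriv vs f z‖ ≤ A / δ ^ vs.length := by
  induction vs generalizing s z with
  | nil => simpa [iteratedDirDeriv] using hA z (by simpa using hz)
  | cons v vs ih =>
    have hshift : s + (v :: vs).length * δ = (s + δ) + vs.length * δ := by
      rw [List.length_cons]; push_cast; ring
    rw [hshift] at hKU hA
    have hstep : ∀ t : ℂ, ‖t‖ ≤ δ → z + t • v ∈ cthickening (s + δ) K := by
      intro t ht
      have hball : z + t • v ∈ closedBall z δ := by
        rw [add_mem_closedBall_iff_norm, norm_smul]
        exact (mul_le_mul ht (hvs v List.mem_cons_self) (norm_nonneg _) hδ.le).trans_eq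
          (mul_one δ)
      rw [add_comm s δ]
      exact cthickening_cthickening_subset hδ.le hs K (closedBall_subset_cthickening hz δ hball)
    have hsub : cthickening (s + δ) K ⊆ U :=
      (cthickening_mono (le_add_of_nonneg_right (by positivity)) K).trans hKU
    calc ‖iteratedDirDeriv (v :: vs) f z‖
        = ‖fderiv ℂ (iteratedDirDeriv vs f) z v‖ := rfl
      _ ≤ A / δ ^ vs.length / δ :=
        norm_fderiv_apply_le hδ
          (fun t ht => (hf.iteratedDirDeriv hU vs).differentiableAt
            (hU.mem_nhds (hsub (hstep t ht))))
          fun t ht => ih (fun w hw => hvs w (List.mem_cons_of_mem v hw)) (by positivity) hKU hA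
            (hstep t ht.le)
      _ = A / δ ^ (v :: vs).length := by rw [div_div, List.length_cons, pow_succ]

/-- `a` Cauchy steps of radius `r / a` cost `(a / r) ^ a ≤ a! (e / r) ^ a`. -/
lemma norm_iteratedDirDeriv_le [FiniteDimensional ℂ E] {U K : Set E} {f : E → ℂ}
    (hf : DifferentiableOn ℂ f U) (hU : IsOpen U) {vs : List E} (hvs : ∀ v ∈ vs, ‖v‖ ≤ 1)
    {r A : ℝ} (hr : 0 < r) (hKU : cthickening r K ⊆ U) (hA : ∀ x ∈ cthickening r K, ‖f x‖ ≤ A)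
    {z : E} (hz : z ∈ K) :
    ‖iteratedDirDeriv vs f z‖ ≤ vs.length ! * (exp 1 / r) ^ vs.length * A := by
  set a := vs.length
  have ha : (0 : ℝ) < max 1 (a : ℝ) := lt_max_of_lt_left one_pos
  have hA0 : 0 ≤ A := (norm_nonneg _).trans (hA z (self_subset_cthickening K hz))
  set δ := r / max 1 (a : ℝ)
  have hmargin : 0 + a * δ ≤ r := calc
    0 + a * δ ≤ max 1 (a : ℝ) * δ := by rw [zero_add]; gcongr; exact le_max_right _ _
    _ = r := mul_div_cancel₀ r ha.ne'
  have hpow : (max 1 (a : ℝ)) ^ a = (a : ℝ) ^ a := by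
    rcases Nat.eq_zero_or_pos a with h | h
    · simp [h]
    · rw [max_eq_right (by exact_mod_cast h)]
  calc ‖iteratedDirDeriv vs f z‖
      ≤ A / δ ^ a := norm_iteratedDirDeriv_le_div_pow hf hU hvs le_rfl (by positivity)
        ((cthickening_mono hmargin K).trans hKU) (fun x hx => hA x (cthickening_mono hmargin K hx))
        (self_subset_cthickening K hz)
    _ = (a : ℝ) ^ a / r ^ a * A := by rw [div_pow, hpow]; field_simp
    _ ≤ a ! * exp 1 ^ a / r ^ a * A := by gcongr; exact pow_self_le_factorial_mul_exp a
    _ = a ! * (exp 1 / r) ^ a * A := by ring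

end DirectionalDerivative

section CoordinateDerivatives

variable {n : ℕ}

def dirList {E : Type*} (w : Fin n → E) (α : Fin n → ℕ) : List E :=
  (List.finRange n).flatMap fun i => List.replicate (α i) (w i)

lemma length_dirList {E : Type*} (w : Fin n → E) (α : Fin n → ℕ) :
    (dirList w α).length = ∑ i, α i := by
  simp [dirList, List.length_flatMap, Fin.sum_univ_def]

lemma norm_le_one_of_mem_dirList {E : Type*} [Norm E] {w : Fin n → E} (hw : ∀ i, ‖w i‖ ≤ 1)
    (α : Fin n → ℕ) : ∀ v ∈ dirList w α, ‖v‖ ≤ 1 := by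
  simp only [dirList, List.mem_flatMap, List.mem_replicate]
  rintro v ⟨i, -, -, rfl⟩
  exact hw i

lemma foldr_iterate_dirDeriv {E : Type*} [NormedAddCommGroup E] [NormedSpace ℂ E]
    (w : Fin n → E) (α : Fin n → ℕ) (l : List (Fin n)) (f : E → ℂ) :
    l.foldr (fun i F => (dirDeriv (w i))^[α i] ∘ F) id f =
      iteratedDirDeriv (l.flatMap fun i => List.replicate (α i) (w i)) f := by
  induction l with
  | nil => rfl
  | cons i l ih =>
    rw [List.flatMap_cons, iteratedDirDeriv_append, iteratedDirDeriv_replicate, ← ih]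
    rfl

lemma dU_eq_iteratedDirDeriv (α : Fin n → ℕ) :
    dU α = iteratedDirDeriv (dirList (fun i => ((0 : Fin n → ℂ), Pi.single i 1)) α) :=
  funext (foldr_iterate_dirDeriv _ α _)

lemma dX_eq_iteratedDirDeriv (α : Fin n → ℕ) :
    dX α = iteratedDirDeriv (dirList (fun i => (Pi.single i 1, (0 : Fin n → ℂ))) α) :=
  funext (foldr_iterate_dirDeriv _ α _)

lemma dU_zero (α : Fin n → ℕ) : dU α 0 = 0 := by
  rw [dU_eq_iteratedDirDeriv, iteratedDirDeriv_zero]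

lemma dX_zero (α : Fin n → ℕ) : dX α 0 = 0 := by
  rw [dX_eq_iteratedDirDeriv, iteratedDirDeriv_zero]

lemma norm_iteratedDirDeriv_dirList_le {E : Type*} [NormedAddCommGroup E] [NormedSpace ℂ E]
    [FiniteDimensional ℂ E] {U K : Set E} {f : E → ℂ} (hf : DifferentiableOn ℂ f U)
    (hU : IsOpen U) {w : Fin n → E} (hw : ∀ i, ‖w i‖ ≤ 1) (α : Fin n → ℕ) {r A : ℝ}
    (hr : 0 < r) (hKU : cthickening r K ⊆ U) (hA : ∀ x ∈ cthickening r K, ‖f x‖ ≤ A) {z : E}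
    (hz : z ∈ K) :
    ‖iteratedDirDeriv (dirList w α) f z‖ ≤ (∑ i, α i)! * (exp 1 / r) ^ (∑ i, α i) * A := by
  simpa only [length_dirList] using
    norm_iteratedDirDeriv_le hf hU (norm_le_one_of_mem_dirList hw α) hr hKU hA hz

lemma norm_dU_le {U K : Set (Phase n)} {f : Phase n → ℂ} (hf : DifferentiableOn ℂ f U)
    (hU : IsOpen U) (α : Fin n → ℕ) {r A : ℝ} (hr : 0 < r) (hKU : cthickening r K ⊆ U)
    (hA : ∀ x ∈ cthickening r K, ‖f x‖ ≤ A) {z : Phase n} (hz : z ∈ K) :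
    ‖dU α f z‖ ≤ (∑ i, α i)! * (exp 1 / r) ^ (∑ i, α i) * A := by
  rw [dU_eq_iteratedDirDeriv]
  exact norm_iteratedDirDeriv_dirList_le hf hU (fun i => by simp [Pi.norm_single]) α hr hKU hA hz

lemma norm_dX_le {U K : Set (Phase n)} {f : Phase n → ℂ} (hf : DifferentiableOn ℂ f U)
    (hU : IsOpen U) (α : Fin n → ℕ) {r A : ℝ} (hr : 0 < r) (hKU : cthickening r K ⊆ U)
    (hA : ∀ x ∈ cthickening r K, ‖f x‖ ≤ A) {z : Phase n} (hz : z ∈ K) :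
    ‖dX α f z‖ ≤ (∑ i, α i)! * (exp 1 / r) ^ (∑ i, α i) * A := by
  rw [dX_eq_iteratedDirDeriv]
  exact norm_iteratedDirDeriv_dirList_le hf hU (fun i => by simp [Pi.norm_single]) α hr hKU hA hz

end CoordinateDerivatives

lemma norm_finsum_le_card_mul {ι F : Type*} [SeminormedAddCommGroup F] {f : ι → F}
    {s : Finset ι} {T : ℝ} (hf : Function.support f ⊆ s) (hT : ∀ i ∈ s, ‖f i‖ ≤ T) :
    ‖∑ᶠ i, f i‖ ≤ s.card * T := by
  rw [finsum_eq_sum_of_support_subset f hf, ← nsmul_eq_mul]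
  exact (norm_sum_le _ _).trans (Finset.sum_le_card_nsmul _ _ _ hT)

lemma MicroEstimates.eventually_norm_le {n : ℕ} {U K : Set (Phase n)} {p : ℤ → Phase n → ℂ}
    {mp : ℤ} (hp : MicroEstimates U p) (hcont : ∀ k, ContinuousOn (p k) U)
    (hvan : ∀ k, mp < k → p k = 0) (hK : IsCompact K) (hKU : K ⊆ U) :
    ∀ᶠ C in atTop, ∀ k, ∀ w ∈ K, ‖p k w‖ ≤ C ^ ((-k).toNat + 1) * (-k).toNat ! := by
  obtain ⟨C₀, hC₀, hpC₀⟩ := hp K hKU hK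
  choose B hB using fun k => hK.exists_bound_of_continuousOn ((hcont k).mono hKU)
  filter_upwards [eventually_ge_atTop (max 1 C₀),
    eventually_ge_atTop (∑ k ∈ Finset.Icc 0 mp, |B k|)] with C hC hCB k w hw
  have hC1 : 1 ≤ C := le_of_max_le_left hC
  rcases lt_or_ge k 0 with hneg | hnonneg
  · calc ‖p k w‖ ≤ C₀ ^ (-k).toNat * (-k).toNat ! := hpC₀ k hneg w hw
      _ ≤ C ^ (-k).toNat * (-k).toNat ! := by gcongr; exact le_of_max_le_right hC
      _ ≤ C ^ ((-k).toNat + 1) * (-k).toNat ! := by gcongr; exact Nat.le_succ _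
  rcases le_or_gt k mp with hle | hgt
  · have hk0 : (-k).toNat = 0 := by omega
    rw [hk0, zero_add, pow_one, Nat.factorial_zero, Nat.cast_one, mul_one]
    calc ‖p k w‖ ≤ |B k| := (hB k w hw).trans (le_abs_self _)
      _ ≤ ∑ k ∈ Finset.Icc 0 mp, |B k| :=
        Finset.single_le_sum (f := fun k => |B k|) (fun _ _ => abs_nonneg _)
          (Finset.mem_Icc.2 ⟨hnonneg, hle⟩)
      _ ≤ C := hCB
  · rw [hvan k hgt, Pi.zero_apply, norm_zero]
    positivity

section LeibnizProduct

variable {n : ℕ}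

noncomputable def leibnizTerm (p q : ℤ → Phase n → ℂ) (j : ℤ) (z : Phase n)
    (ak : (Fin n → ℕ) × ℤ) : ℂ :=
  ((∏ i, (ak.1 i).factorial : ℕ) : ℂ)⁻¹ * dU ak.1 (p ak.2) z
    * dX ak.1 (q (j + ((∑ i, ak.1 i : ℕ) : ℤ) - ak.2)) z

lemma leibniz_apply (p q : ℤ → Phase n → ℂ) (j : ℤ) (z : Phase n) :
    leibniz p q j z = ∑ᶠ ak, leibnizTerm p q j z ak := rfl

lemma norm_inv_factorial_mul_dU_mul_dX_le {U K : Set (Phase n)} {g h : Phase n → ℂ}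
    (hg : DifferentiableOn ℂ g U) (hh : DifferentiableOn ℂ h U) (hU : IsOpen U)
    (α : Fin n → ℕ) {r A B : ℝ} (hr : 0 < r) (hKU : cthickening r K ⊆ U)
    (hA : ∀ x ∈ cthickening r K, ‖g x‖ ≤ A) (hB : ∀ x ∈ cthickening r K, ‖h x‖ ≤ B)
    {z : Phase n} (hz : z ∈ K) :
    ‖((∏ i, (α i)! : ℕ) : ℂ)⁻¹ * dU α g z * dX α h z‖ ≤
      (n * (exp 1 / r) ^ 2) ^ (∑ i, α i) * (∑ i, α i)! * A * B := by
  set a := ∑ i, α i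
  have hA0 : 0 ≤ A := (norm_nonneg _).trans (hA z (self_subset_cthickening K hz))
  have hB0 : 0 ≤ B := (norm_nonneg _).trans (hB z (self_subset_cthickening K hz))
  have hspec : (a ! : ℝ) = (∏ i, (α i)! : ℕ) * Nat.multinomial Finset.univ α := by
    exact_mod_cast (Nat.multinomial_spec Finset.univ α).symm
  have hmult : (Nat.multinomial Finset.univ α : ℝ) ≤ n ^ a := by
    exact_mod_cast (by simpa using Nat.multinomial_univ_le_card_pow α)
  calc ‖((∏ i, (α i)! : ℕ) : ℂ)⁻¹ * dU α g z * dX α h z‖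
      = ((∏ i, (α i)! : ℕ) : ℝ)⁻¹ * ‖dU α g z‖ * ‖dX α h z‖ := by
        rw [norm_mul, norm_mul, norm_inv, Complex.norm_natCast]
    _ ≤ ((∏ i, (α i)! : ℕ) : ℝ)⁻¹ * (a ! * (exp 1 / r) ^ a * A) * (a ! * (exp 1 / r) ^ a * B) := by
        gcongr
        · exact norm_dU_le hg hU α hr hKU hA hz
        · exact norm_dX_le hh hU α hr hKU hB hz
    _ = Nat.multinomial Finset.univ α * ((exp 1 / r) ^ 2) ^ a * a ! * A * B := by
        rw [hspec]
        field_simp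
        ring
    _ ≤ n ^ a * ((exp 1 / r) ^ 2) ^ a * a ! * A * B := by gcongr
    _ = (n * (exp 1 / r) ^ 2) ^ a * a ! * A * B := by rw [mul_pow]

lemma norm_leibnizTerm_le {U K : Set (Phase n)} (hU : IsOpen U) {p q : ℤ → Phase n → ℂ}
    (hp : ∀ k, DifferentiableOn ℂ (p k) U) (hq : ∀ l, DifferentiableOn ℂ (q l) U) {r C : ℝ}
    (hr : 0 < r) (hKU : cthickening r K ⊆ U) (hC : 1 ≤ C)
    (hpC : ∀ k, ∀ w ∈ cthickening r K, ‖p k w‖ ≤ C ^ ((-k).toNat + 1) * (-k).toNat !)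
    (hqC : ∀ l, ∀ w ∈ cthickening r K, ‖q l w‖ ≤ C ^ ((-l).toNat + 1) * (-l).toNat !)
    (j : ℤ) {z : Phase n} (hz : z ∈ K) {α : Fin n → ℕ} {k : ℤ} {N : ℕ}
    (hN : (∑ i, α i) + (-k).toNat + (-(j + ((∑ i, α i : ℕ) : ℤ) - k)).toNat ≤ N) :
    ‖leibnizTerm p q j z (α, k)‖ ≤ C ^ 2 * max (n * (exp 1 / r) ^ 2) C ^ N * N ! :=
  (norm_inv_factorial_mul_dU_mul_dX_le (hp k) (hq _) hU α hr hKU (hpC k) (hqC _) hz).trans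
    (pow_mul_factorial_mul_le (by positivity) hC hN)

lemma exists_finset_support_leibnizTerm {p q : ℤ → Phase n → ℂ} {mp mq : ℤ}
    (hp : ∀ k, mp < k → p k = 0) (hq : ∀ l, mq < l → q l = 0) (j : ℤ) (z : Phase n) :
    ∃ S : Finset ((Fin n → ℕ) × ℤ), Function.support (leibnizTerm p q j z) ⊆ S ∧
      S.card ≤ ((mp + mq - j).toNat + 1) ^ (n + 1) ∧
      ∀ ak ∈ S, ak.2 ≤ mp ∧ j + ((∑ i, ak.1 i : ℕ) : ℤ) - ak.2 ≤ mq := by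
  set N := (mp + mq - j).toNat
  refine ⟨((Fintype.piFinset fun _ => Finset.range (N + 1)) ×ˢ Finset.Icc (j - mq) mp).filter
    fun ak => j + ((∑ i, ak.1 i : ℕ) : ℤ) - ak.2 ≤ mq, ?_, ?_, ?_⟩
  · rintro ⟨α, k⟩ hne
    have hk : k ≤ mp := by
      by_contra! hk
      apply hne
      simp only [leibnizTerm]
      rw [hp k hk, dU_zero, Pi.zero_apply, mul_zero, zero_mul]
    have hl : j + ((∑ i, α i : ℕ) : ℤ) - k ≤ mq := by
      by_contra! hl
      apply hne
      simp only [leibnizTerm]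
      rw [hq _ hl, dX_zero, Pi.zero_apply, mul_zero]
    have hα : ∀ i, α i ≤ ∑ i, α i := fun i =>
      Finset.single_le_sum (fun _ _ => Nat.zero_le _) (Finset.mem_univ i)
    simp only [Finset.coe_filter, Finset.mem_product, Fintype.mem_piFinset, Finset.mem_range,
      Finset.mem_Icc, Set.mem_ofPred_eq]
    exact ⟨⟨fun i => by have := hα i; omega, by omega, hk⟩, hl⟩
  · calc _ ≤ ((Fintype.piFinset fun _ => Finset.range (N + 1)) ×ˢ Finset.Icc (j - mq) mp).card :=
          Finset.card_filter_le _ _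
      _ = (N + 1) ^ n * (Finset.Icc (j - mq) mp).card := by simp [Finset.card_product]
      _ ≤ (N + 1) ^ n * (N + 1) := by gcongr; rw [Int.card_Icc]; omega
      _ = (N + 1) ^ (n + 1) := (pow_succ _ _).symm
  · intro ak hak
    simp only [Finset.mem_filter, Finset.mem_product, Finset.mem_Icc] at hak
    exact ⟨hak.1.2.2, hak.2⟩

end LeibnizProduct

theorem stmt_15_general (n : ℕ) (U : Set (Phase n)) (hU : IsOpen U)
    (p q : ℤ → Phase n → ℂ)
    (hpholo : ∀ j : ℤ, DifferentiableOn ℂ (p j) U)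
    (hqholo : ∀ j : ℤ, DifferentiableOn ℂ (q j) U)
    (mp mq : ℤ)
    (hpbound : ∀ j : ℤ, mp < j → p j = 0)
    (hqbound : ∀ j : ℤ, mq < j → q j = 0)
    (hpest : MicroEstimates U p)
    (hqest : MicroEstimates U q) :
    MicroEstimates U (leibniz p q) := by
  intro K hKU hK
  obtain ⟨r, hr, hrU⟩ := hK.exists_cthickening_subset_open hU hKU
  obtain ⟨C, hC, hpC, hqC⟩ := ((eventually_ge_atTop 1).and
    ((hpest.eventually_norm_le (fun k => (hpholo k).continuousOn) hpbound hK.cthickening hrU).and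
      (hqest.eventually_norm_le (fun l => (hqholo l).continuousOn) hqbound hK.cthickening
        hrU))).exists
  set D := max (n * (exp 1 / r) ^ 2) C
  set P := mp.toNat + mq.toNat
  obtain ⟨G, hG, hGm⟩ := exists_pow_mul_factorial_bound P (n + 1) (sq_nonneg C)
    (zero_le_one.trans (hC.trans (le_max_right _ _)) : 0 ≤ D)
  refine ⟨G, hG, fun j hj z hz => ?_⟩
  obtain ⟨S, hsupp, hcard, hS⟩ := exists_finset_support_leibnizTerm hpbound hqbound j z
  set m := (-j).toNat
  rw [leibniz_apply]
  calc ‖∑ᶠ ak, leibnizTerm p q j z ak‖ ≤ S.card * (C ^ 2 * D ^ (m + P) * (m + P)!) :=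
        norm_finsum_le_card_mul hsupp fun ak hak =>
          norm_leibnizTerm_le hU hpholo hqholo hr hrU hC hpC hqC j hz (by have := hS ak hak; omega)
    _ ≤ ((m + P + 1 : ℕ) : ℝ) ^ (n + 1) * (C ^ 2 * D ^ (m + P) * (m + P)!) := by
        gcongr
        exact_mod_cast hcard.trans (Nat.pow_le_pow_left (by omega) _)
    _ ≤ G ^ m * m ! := hGm m (by omega)

/-- if the formal WKB symbols `p` and `q` on `U` satisfy the
microdifferential estimates, so does their Leibniz product `p★q`
(closure of `𝒲_X` under composition, Section 7 of the paper). -/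
theorem stmt_15 (n : ℕ) (hn : 1 ≤ n) (U : Set (Phase n)) (hU : IsOpen U)
    (p q : ℤ → Phase n → ℂ)
    (hpholo : ∀ j : ℤ, DifferentiableOn ℂ (p j) U)
    (hqholo : ∀ j : ℤ, DifferentiableOn ℂ (q j) U)
    (mp mq : ℤ)
    (hpbound : ∀ j : ℤ, mp < j → p j = 0)
    (hqbound : ∀ j : ℤ, mq < j → q j = 0)
    (hpest : MicroEstimates U p)
    (hqest : MicroEstimates U q) :
    MicroEstimates U (leibniz p q) :=
  stmt_15_general n U hU p q hpholo hqholo mp mq hpbound hqbound hpest hqest
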